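/- arXiv:1606.08925 — 5 statements merged into one kernel-verified Lean document; each statement's English description precedes it below -/
import Mathlib

section
/- Let V be a finite-dimensional real inner product space and A : V → V a self-adjoint linear map. Let U and W be linear subspaces of V such that U ∩ W = {0} and such that ⟨A v, v⟩ > 0 for every nonzero v ∈ U + W. Then the linear map F : U × W → U × W defined by F(u, w) = ( P_U(A(u+w)), P_W(A(u+w)) ), where P_U and P_W denote the orthogonal projections of V onto U and W respectively, is bijective (invertible). -/
open scoped RealInnerProductSpace

/-! If `F (u, w) = 0`, then `A (u + w)` is orthogonal to both `U` and `W`, hence to `U ⊔ W`, and in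
particular to `u + w` itself. Positivity of `⟪A v, v⟫` on `U ⊔ W` forces `u + w = 0`, and since
`U ⊓ W = ⊥` this gives `u = w = 0`. So `F` is an injective endomorphism of the finite-dimensional
space `U × W`, hence bijective. -/

namespace Submodule

theorem injective_subtype_coprod_subtype {R M : Type*} [Ring R] [AddCommGroup M] [Module R M]
    {U W : Submodule R M} (hUW : Disjoint U W) :
    Function.Injective (U.subtype.coprod W.subtype) := by
  rw [← LinearMap.ker_eq_bot,
    LinearMap.ker_coprod_of_disjoint_range _ _ (by simpa only [range_subtype] using hUW),
    ker_subtype, ker_subtype, prod_bot]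

variable {V : Type*} [NormedAddCommGroup V] [InnerProductSpace ℝ V]
  (A : V →ₗ[ℝ] V) (U W : Submodule ℝ V) [U.HasOrthogonalProjection] [W.HasOrthogonalProjection]

noncomputable def compressionProd : U × W →ₗ[ℝ] U × W :=
  let B := A ∘ₗ U.subtype.coprod W.subtype
  (U.orthogonalProjectionOnto.toLinearMap ∘ₗ B).prod (W.orthogonalProjectionOnto.toLinearMap ∘ₗ B)

variable {A U W}

theorem compressionProd_eq_zero_iff {p : U × W} :
    compressionProd A U W p = 0 ↔ A (p.1 + p.2) ∈ (U ⊔ W)ᗮ := by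
  rw [← inf_orthogonal, mem_inf, ← orthogonalProjectionOnto_eq_zero_iff,
    ← orthogonalProjectionOnto_eq_zero_iff]
  exact Prod.ext_iff

theorem ker_compressionProd_eq_bot (hUW : Disjoint U W)
    (hpos : ∀ v ∈ U ⊔ W, v ≠ 0 → 0 < ⟪A v, v⟫) : LinearMap.ker (compressionProd A U W) = ⊥ := by
  refine LinearMap.ker_eq_bot'.mpr fun p hp => injective_subtype_coprod_subtype hUW ?_
  let v : V := p.1 + p.2
  have hv : v ∈ U ⊔ W := add_mem_sup p.1.2 p.2.2
  have hAv : ⟪A v, v⟫ = 0 := inner_left_of_mem_orthogonal hv (compressionProd_eq_zero_iff.mp hp)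
  have hv0 : v = 0 := by_contra fun hne => (hpos v hv hne).ne' hAv
  simpa using hv0

end Submodule

open Submodule in
theorem F_invertible_general
    (V : Type*) [NormedAddCommGroup V] [InnerProductSpace ℝ V] [FiniteDimensional ℝ V]
    (A : V →ₗ[ℝ] V)
    (U W : Submodule ℝ V) (hUW : U ⊓ W = ⊥)
    (hpos : ∀ v ∈ U ⊔ W, v ≠ 0 → 0 < ⟪A v, v⟫) :
    Function.Bijective (fun p : U × W =>
      ((U.orthogonalProjectionOnto (A ((p.1 : V) + (p.2 : V))),
        W.orthogonalProjectionOnto (A ((p.1 : V) + (p.2 : V)))) : U × W)) := by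
  have hinj : Function.Injective (compressionProd A U W) :=
    LinearMap.ker_eq_bot.mp (ker_compressionProd_eq_bot (disjoint_iff.mpr hUW) hpos)
  exact ⟨hinj, LinearMap.injective_iff_surjective.mp hinj⟩

/-- Abstract form of Lemma 1: if `A` is a self-adjoint operator on a finite-dimensional real
inner product space `V`, `U` and `W` are subspaces with trivial intersection, and
`⟨A v, v⟩ > 0` for every nonzero `v ∈ U + W`, then the operator
`F(u, w) = (P_U (A (u + w)), P_W (A (u + w)))` is invertible on `U × W`. -/
theorem F_invertible
    (V : Type*) [NormedAddCommGroup V] [InnerProductSpace ℝ V] [FiniteDimensional ℝ V]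
    (A : V →ₗ[ℝ] V) (hA : ∀ x y : V, ⟪A x, y⟫ = ⟪x, A y⟫)
    (U W : Submodule ℝ V) (hUW : U ⊓ W = ⊥)
    (hpos : ∀ v ∈ U ⊔ W, v ≠ 0 → 0 < ⟪A v, v⟫) :
    Function.Bijective (fun p : U × W =>
      ((U.orthogonalProjectionOnto (A ((p.1 : V) + (p.2 : V))),
        W.orthogonalProjectionOnto (A ((p.1 : V) + (p.2 : V)))) : U × W)) :=
  F_invertible_general V A U W hUW hpos
end

section
/- Let L* be a J×J real symmetric positive semidefinite matrix of rank K whose K positive eigenvalues are distinct, with eigendecomposition L* = U₁* D₁* U₁*ᵀ, where U₁* ∈ ℝ^{J×K} has orthonormal columns (U₁*ᵀU₁* = I_K) and D₁* is the K×K diagonal matrix of the positive eigenvalues. Then for every constant κ > 0 there exist constants ε > 0 and γ₀ > 0 such that for every γ ∈ (0, γ₀], every J×K real matrix U₁ with U₁ᵀU₁ = I_K and ‖U₁ − U₁*‖∞ = γ, and every K×K diagonal matrix D₁ with ‖D₁ − D₁*‖∞ ≤ κ γ, one has ‖U₁ D₁ U₁ᵀ − L*‖∞ ≥ ε γ. 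-/
open Matrix

attribute [local instance] Matrix.normedAddCommGroup

/-!
Write `V = U + E`, `A = Uᵀ E`, `D = diagonal d`, `D' = diagonal e`, `Δ = D' - D` and
`M = V D' Vᵀ - U D Uᵀ`. Orthonormality of the columns of `U` and `V` gives `A + Aᵀ = -Eᵀ E`, and
compressing `M` by `U` gives `Uᵀ M U = (1 + A) D' (1 + A)ᵀ - D`; together they show that
`Δ + (A D - D A)` equals `Uᵀ M U` up to terms quadratic in `E` (once `‖Δ‖ = O(‖E‖)`).
The diagonal of `Δ + (A D - D A)` is `Δ`, and its off-diagonal entries are `A i j (d j - d i)`,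
so distinct eigenvalues recover the off-diagonal part of `A`, while `A + Aᵀ = -Eᵀ E` controls
its diagonal. Finally `E D = M U - V (Δ + D' Aᵀ)` with `D` invertible, so
`‖E‖ = O(‖M‖ + ‖E‖²)`, and for `‖E‖ = γ` small the quadratic term is absorbed.
-/

open Asymptotics Filter Function

namespace Matrix

section Norm

variable {l m n α : Type*} [Fintype l] [Fintype m] [Fintype n]

theorem norm_mul_le_card_mul [NonUnitalNormedRing α] (A : Matrix l m α) (B : Matrix m n α) :
    ‖A * B‖ ≤ Fintype.card m * (‖A‖ * ‖B‖) := by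
  rw [norm_le_iff (by positivity)]
  intro i j
  calc ‖(A * B) i j‖ ≤ ∑ k, ‖A i k‖ * ‖B k j‖ := norm_sum_le_of_le _ fun k _ => norm_mul_le _ _
    _ ≤ ∑ _k : m, ‖A‖ * ‖B‖ := Finset.sum_le_sum fun k _ =>
        mul_le_mul (norm_entry_le_entrywise_sup_norm A) (norm_entry_le_entrywise_sup_norm B)
          (norm_nonneg _) (norm_nonneg _)
    _ = Fintype.card m * (‖A‖ * ‖B‖) := by simp

variable [DecidableEq n]

theorem norm_le_one_of_transpose_mul_self_eq_one {U : Matrix m n ℝ} (hU : Uᵀ * U = 1) :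
    ‖U‖ ≤ 1 := by
  rw [norm_le_iff zero_le_one]
  intro i j
  have hcol : ∑ k, U k j ^ 2 = 1 := by
    simpa [mul_apply, sq] using congrFun (congrFun hU j) j
  have hentry : U i j ^ 2 ≤ 1 :=
    hcol ▸ Finset.single_le_sum (f := fun k => U k j ^ 2) (fun _ _ => sq_nonneg _)
      (Finset.mem_univ i)
  rwa [Real.norm_eq_abs, ← sq_le_one_iff_abs_le_one]

theorem norm_diagonal_le_norm_diagonal_add_commutator [NormedCommRing α] (δ d : n → α)
    (A : Matrix n n α) : ‖diagonal δ‖ ≤ ‖diagonal δ + (A * diagonal d - diagonal d * A)‖ := by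
  rw [norm_diagonal, pi_norm_le_iff_of_nonneg (norm_nonneg _)]
  intro i
  simpa [mul_comm] using norm_entry_le_entrywise_sup_norm
    (diagonal δ + (A * diagonal d - diagonal d * A)) (i := i) (j := i)

theorem exists_norm_le_norm_diagonal_add_commutator {d : n → ℝ} (hd : Injective d) :
    ∃ c, ∀ (A : Matrix n n ℝ) (δ : n → ℝ),
      ‖A‖ ≤ c * ‖diagonal δ + (A * diagonal d - diagonal d * A)‖ + ‖A + Aᵀ‖ := by
  -- `c` bounds the inverse eigenvalue gaps; on the diagonal `|0|⁻¹ = 0` is harmless.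
  obtain ⟨c, hc⟩ := Finite.exists_le fun p : n × n => |d p.1 - d p.2|⁻¹
  refine ⟨max c 0, fun A δ => ?_⟩
  set R := diagonal δ + (A * diagonal d - diagonal d * A)
  have hc0 : 0 ≤ max c 0 * ‖R‖ := by positivity
  rw [norm_le_iff (by positivity)]
  intro i j
  rcases eq_or_ne i j with rfl | hij
  · have h := norm_entry_le_entrywise_sup_norm (A + Aᵀ) (i := i) (j := i)
    simp only [add_apply, transpose_apply, Real.norm_eq_abs, ← two_mul, abs_mul, abs_two]
      at h ⊢
    linarith [abs_nonneg (A i i)]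
  · have hR : R i j = A i j * (d j - d i) := by
      simp [R, diagonal_apply_ne _ hij]; ring
    have hA : A i j = R i j * (d j - d i)⁻¹ := by
      rw [hR, mul_inv_cancel_right₀ (sub_ne_zero.mpr (hd.ne hij.symm))]
    calc ‖A i j‖ = ‖R i j‖ * |d j - d i|⁻¹ := by simp [hA]
      _ ≤ ‖R‖ * max c 0 := mul_le_mul (norm_entry_le_entrywise_sup_norm R)
          (le_max_of_le_left (hc (j, i))) (by positivity) (norm_nonneg _)
      _ ≤ max c 0 * ‖R‖ + ‖A + Aᵀ‖ := by rw [mul_comm]; linarith [norm_nonneg (A + Aᵀ)]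

end Norm

section Identities

variable {m n R : Type*} [Fintype m] [DecidableEq n] [CommRing R] {U V : Matrix m n R}
  {A : Matrix n n R}

theorem transpose_mul_sub_add_transpose (hU : Uᵀ * U = 1) (hV : Vᵀ * V = 1) :
    Uᵀ * (V - U) + (Uᵀ * (V - U))ᵀ = -((V - U)ᵀ * (V - U)) := by
  simp only [transpose_mul, transpose_transpose, transpose_sub, transpose_one, Matrix.mul_sub,
    Matrix.sub_mul, hU, hV]
  abel

theorem transpose_mul_conj_sub_conj_mul [Fintype n] (hU : Uᵀ * U = 1)
    (hA : Uᵀ * (V - U) = A) (D D' : Matrix n n R) :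
    Uᵀ * (V * D' * Vᵀ - U * D * Uᵀ) * U = (1 + A) * D' * (1 + A)ᵀ - D := by
  have hUV : Uᵀ * V = 1 + A := by rw [← hA, Matrix.mul_sub, hU]; abel
  have hVU : Vᵀ * U = (1 + A)ᵀ := by rw [← hUV, transpose_mul, transpose_transpose]
  simp only [Matrix.mul_sub, Matrix.sub_mul, ← Matrix.mul_assoc, hUV, hU, Matrix.one_mul]
  simp only [Matrix.mul_assoc, hVU, hU, Matrix.mul_one]

theorem sub_mul_eq_conj_sub_conj_mul_sub [Fintype n] (hU : Uᵀ * U = 1)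
    (hA : Uᵀ * (V - U) = A) (D D' : Matrix n n R) :
    (V - U) * D = (V * D' * Vᵀ - U * D * Uᵀ) * U - V * (D' - D + D' * Aᵀ) := by
  have hVU : Vᵀ * U = 1 + Aᵀ := by
    rw [← hA, transpose_mul, transpose_transpose, transpose_sub, Matrix.sub_mul, hU]; abel
  simp only [Matrix.sub_mul, Matrix.mul_assoc, hVU, hU, Matrix.mul_one, Matrix.mul_add,
    Matrix.mul_sub]
  abel

theorem sub_add_commutator_eq [Fintype n] {S D D' : Matrix n n R} (hS : A + Aᵀ = -S) :
    D' - D + (A * D - D * A) = ((1 + A) * D' * (1 + A)ᵀ - D) + D' * S - A * D' * Aᵀ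
      - (A * (D' - D) - (D' - D) * A) := by
  have hAt : Aᵀ = -S - A := eq_sub_of_add_eq' hS
  rw [transpose_add, transpose_one, hAt]
  noncomm_ring

end Identities

end Matrix

namespace Asymptotics

variable {β l m n α : Type*} [Fintype l] [Fintype m] [Fintype n] [NonUnitalNormedRing α]
  {L : Filter β}

theorem isBigO_matrix_mul (f : β → Matrix l m α) (g : β → Matrix m n α) :
    (fun x => f x * g x) =O[L] fun x => ‖f x‖ * ‖g x‖ :=
  IsBigO.of_bound (Fintype.card m) <| Eventually.of_forall fun _ => by
    rw [Real.norm_of_nonneg (by positivity)]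
    exact norm_mul_le_card_mul _ _

theorem IsBigO.matrix_mul {f : β → Matrix l m α} {g : β → Matrix m n α} {u v : β → ℝ}
    (hf : f =O[L] u) (hg : g =O[L] v) : (fun x => f x * g x) =O[L] fun x => u x * v x :=
  (isBigO_matrix_mul f g).trans (hf.norm_left.mul hg.norm_left)

theorem IsBigO.matrix_transpose {f : β → Matrix m n α} {u : β → ℝ} (hf : f =O[L] u) :
    (fun x => (f x)ᵀ) =O[L] u :=
  (hf.norm_left.congr_left fun _ => (norm_transpose _).symm).of_norm_left

theorem isBigO_transpose_mul_self (f : β → Matrix m n α) :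
    (fun x => (f x)ᵀ * f x) =O[L] fun x => ‖f x‖ * ‖f x‖ :=
  (isBigO_matrix_mul _ _).congr_right fun _ => by rw [norm_transpose]

theorem isBigO_const_matrix_mul (B : Matrix l m α) (f : β → Matrix m n α) :
    (fun x => B * f x) =O[L] f :=
  IsBigO.of_bound (Fintype.card m * ‖B‖) <| Eventually.of_forall fun _ =>
    (norm_mul_le_card_mul _ _).trans_eq (by ring)

theorem isBigO_matrix_mul_const (f : β → Matrix l m α) (B : Matrix m n α) :
    (fun x => f x * B) =O[L] f :=
  IsBigO.of_bound (Fintype.card m * ‖B‖) <| Eventually.of_forall fun _ =>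
    (norm_mul_le_card_mul _ _).trans_eq (by ring)

end Asymptotics

section Perturbation

variable {β m n : Type*} [Fintype m] [Fintype n] [DecidableEq n] {L : Filter β}
  {U : Matrix m n ℝ} {d : n → ℝ} {V : β → Matrix m n ℝ} {e : β → n → ℝ} {g : β → ℝ}

theorem isBigO_one_of_transpose_mul_self_eq_one (hV : ∀ᶠ x in L, (V x)ᵀ * V x = 1) :
    V =O[L] fun _ => (1 : ℝ) :=
  IsBigO.of_bound 1 <| hV.mono fun x hx => by
    simpa using norm_le_one_of_transpose_mul_self_eq_one hx

theorem isBigO_diagonal_one (hV : ∀ᶠ x in L, (V x)ᵀ * V x = 1)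
    (he : (fun x => diagonal (e x) - diagonal d) =O[L] fun x => V x - U) :
    (fun x => diagonal (e x)) =O[L] fun _ => (1 : ℝ) :=
  ((he.trans ((isBigO_one_of_transpose_mul_self_eq_one hV).sub
    (isBigO_const_const U one_ne_zero L))).add
      (isBigO_const_const (diagonal d) one_ne_zero L)).congr_left fun _ => sub_add_cancel _ _

theorem isBigO_diagonal_sub_add_commutator (hU : Uᵀ * U = 1)
    (hV : ∀ᶠ x in L, (V x)ᵀ * V x = 1)
    (he : (fun x => diagonal (e x) - diagonal d) =O[L] fun x => V x - U)
    (hM : (fun x => V x * diagonal (e x) * (V x)ᵀ - U * diagonal d * Uᵀ) =O[L] g)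
    (hE : (fun x => ‖V x - U‖ * ‖V x - U‖) =O[L] g) :
    (fun x => diagonal (e x) - diagonal d
      + (Uᵀ * (V x - U) * diagonal d - diagonal d * (Uᵀ * (V x - U)))) =O[L] g := by
  set E := fun x => V x - U
  set A := fun x => Uᵀ * E x
  have hD' := isBigO_diagonal_one hV he
  have hΔ : (fun x => diagonal (e x) - diagonal d) =O[L] fun x => ‖E x‖ := he.norm_right
  have hA : A =O[L] fun x => ‖E x‖ := (isBigO_const_matrix_mul _ _).norm_right
  refine IsBigO.congr' (f₁ := fun x =>
      Uᵀ * (V x * diagonal (e x) * (V x)ᵀ - U * diagonal d * Uᵀ) * U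
        + diagonal (e x) * ((E x)ᵀ * E x) - A x * diagonal (e x) * (A x)ᵀ
        - (A x * (diagonal (e x) - diagonal d) - (diagonal (e x) - diagonal d) * A x))
    ?_ ?_ EventuallyEq.rfl
  · refine (((?_ : _ =O[L] g).add ?_).sub ?_).sub ?_
    · exact ((isBigO_matrix_mul_const _ U).trans (isBigO_const_matrix_mul Uᵀ _)).trans hM
    · exact (hD'.matrix_mul ((isBigO_transpose_mul_self E).trans hE)).congr_right
        fun _ => one_mul _
    · exact (((hA.matrix_mul hD').matrix_mul hA.matrix_transpose).congr_right
        fun _ => by ring).trans hE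
    · exact ((hA.matrix_mul hΔ).sub (hΔ.matrix_mul hA)).trans hE
  · filter_upwards [hV] with x hx
    rw [sub_add_commutator_eq (transpose_mul_sub_add_transpose hU hx),
      transpose_mul_conj_sub_conj_mul hU rfl]

theorem isBigO_sub_of_isBigO_conj_sub_conj (hU : Uᵀ * U = 1) (hd0 : ∀ i, d i ≠ 0)
    (hd : Injective d) (hV : ∀ᶠ x in L, (V x)ᵀ * V x = 1)
    (he : (fun x => diagonal (e x) - diagonal d) =O[L] fun x => V x - U)
    (hM : (fun x => V x * diagonal (e x) * (V x)ᵀ - U * diagonal d * Uᵀ) =O[L] g)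
    (hE : (fun x => ‖V x - U‖ * ‖V x - U‖) =O[L] g) :
    (fun x => V x - U) =O[L] g := by
  set E := fun x => V x - U
  set A := fun x => Uᵀ * E x
  have hR := isBigO_diagonal_sub_add_commutator hU hV he hM hE
  have hS : (fun x => (E x)ᵀ * E x) =O[L] g := (isBigO_transpose_mul_self E).trans hE
  have hAS : ∀ᶠ x in L, A x + (A x)ᵀ = -((E x)ᵀ * E x) :=
    hV.mono fun x hx => transpose_mul_sub_add_transpose hU hx
  have hδ : ∀ x, diagonal (e x - d) = diagonal (e x) - diagonal d :=
    fun x => (diagonal_sub _ _).symm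
  have hΔ : (fun x => diagonal (e x) - diagonal d) =O[L] g :=
    (IsBigO.of_bound' <| Eventually.of_forall fun x => by
      rw [← hδ]
      exact norm_diagonal_le_norm_diagonal_add_commutator (e x - d) d (A x)).trans hR
  obtain ⟨c, hc⟩ := exists_norm_le_norm_diagonal_add_commutator hd
  have hA : A =O[L] g := by
    refine (IsBigO.of_bound' ?_).trans ((hR.norm_left.const_mul_left c).add hS.norm_left)
    filter_upwards [hAS] with x hx
    have hbound := hc (A x) (e x - d)
    rw [hδ, hx, norm_neg] at hbound
    exact hbound.trans (le_abs_self _)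
  have hED : (fun x => E x * diagonal d) =O[L] g := by
    refine IsBigO.congr' (f₁ := fun x => (V x * diagonal (e x) * (V x)ᵀ - U * diagonal d * Uᵀ)
        * U - V x * (diagonal (e x) - diagonal d + diagonal (e x) * (A x)ᵀ)) ?_ ?_
      EventuallyEq.rfl
    · refine ((isBigO_matrix_mul_const _ U).trans hM).sub ?_
      refine ((isBigO_one_of_transpose_mul_self_eq_one hV).matrix_mul (hΔ.add ?_)).congr_right
        fun _ => one_mul _
      exact ((isBigO_diagonal_one hV he).matrix_mul hA.matrix_transpose).congr_right
        fun _ => one_mul _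
    · exact Eventually.of_forall fun x => (sub_mul_eq_conj_sub_conj_mul_sub hU rfl _ _).symm
  refine ((isBigO_matrix_mul_const (fun x => E x * diagonal d) (diagonal d⁻¹)).congr_left
    fun x => ?_).trans hED
  rw [Matrix.mul_assoc, diagonal_mul_diagonal]
  simp [hd0]

/- With `L` the principal filter of a set of pairs `(V, e)`, this is a bound
`‖V - U‖ ≤ C (‖M‖ + ‖V - U‖²)` holding uniformly on that set. -/
theorem isBigO_sub_norm_conj_sub_conj_add_sq (hU : Uᵀ * U = 1) (hd0 : ∀ i, d i ≠ 0)
    (hd : Injective d) (hV : ∀ᶠ x in L, (V x)ᵀ * V x = 1)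
    (he : (fun x => diagonal (e x) - diagonal d) =O[L] fun x => V x - U) :
    (fun x => V x - U) =O[L] fun x =>
      ‖V x * diagonal (e x) * (V x)ᵀ - U * diagonal d * Uᵀ‖ + ‖V x - U‖ ^ 2 := by
  refine isBigO_sub_of_isBigO_conj_sub_conj hU hd0 hd hV he
    (IsBigO.of_bound' <| Eventually.of_forall fun x => ?_)
    (IsBigO.of_bound' <| Eventually.of_forall fun x => ?_)
  · rw [Real.norm_of_nonneg (by positivity)]
    exact le_add_of_nonneg_right (sq_nonneg _)
  · rw [Real.norm_of_nonneg (by positivity), Real.norm_of_nonneg (by positivity), ← sq]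
    exact le_add_of_nonneg_left (norm_nonneg _)

end Perturbation

theorem eigenvalue_perturbation_general
    (J K : ℕ) (Lstar : Matrix (Fin J) (Fin J) ℝ)
    (U1star : Matrix (Fin J) (Fin K) ℝ) (d : Fin K → ℝ)
    (hU : U1starᵀ * U1star = 1)
    (hdpos : ∀ i, 0 < d i)
    (hdistinct : Function.Injective d)
    (hdecomp : Lstar = U1star * Matrix.diagonal d * U1starᵀ) :
    ∀ κ > (0 : ℝ), ∃ ε > (0 : ℝ), ∃ γ₀ > (0 : ℝ), ∀ γ : ℝ, 0 < γ → γ ≤ γ₀ →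
      ∀ U1 : Matrix (Fin J) (Fin K) ℝ, U1ᵀ * U1 = 1 → ‖U1 - U1star‖ = γ →
      ∀ e : Fin K → ℝ, ‖Matrix.diagonal e - Matrix.diagonal d‖ ≤ κ * γ →
      ε * γ ≤ ‖U1 * Matrix.diagonal e * U1ᵀ - Lstar‖ := by
  intro κ _
  let S := {p : Matrix (Fin J) (Fin K) ℝ × (Fin K → ℝ) |
    p.1ᵀ * p.1 = 1 ∧ ‖diagonal p.2 - diagonal d‖ ≤ κ * ‖p.1 - U1star‖}
  obtain ⟨C, hC, hbound⟩ := (isBigO_sub_norm_conj_sub_conj_add_sq (L := 𝓟 S) hU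
    (fun i => (hdpos i).ne') hdistinct (eventually_principal.2 fun p hp => hp.1)
    (IsBigO.of_bound κ (eventually_principal.2 fun p hp => hp.2))).exists_pos
  refine ⟨1 / (2 * C), by positivity, 1 / (2 * C), by positivity, ?_⟩
  intro γ hγ hγ₀ U1 hU1 hγU1 e he
  have key := eventually_principal.1 hbound.bound (U1, e) ⟨hU1, hγU1 ▸ he⟩
  rw [← hdecomp, hγU1, Real.norm_of_nonneg (by positivity)] at key
  have hsq : C * γ ^ 2 ≤ γ / 2 := by
    rw [le_div_iff₀ (by positivity)] at hγ₀
    nlinarith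
  rw [div_mul_eq_mul_div, one_mul, div_le_iff₀ (by positivity)]
  nlinarith

/-- Lemma 9 (eigenvalue perturbation): let `L* = U₁* D₁* U₁*ᵀ` be a rank-`K` symmetric PSD
matrix with distinct positive eigenvalues. For every `κ > 0` there are `ε > 0` and `γ₀ > 0`
such that for all `0 < γ ≤ γ₀`, all `U₁` with orthonormal columns and `‖U₁ - U₁*‖∞ = γ`, and
all diagonal `D₁` with `‖D₁ - D₁*‖∞ ≤ κ γ`, one has `‖U₁ D₁ U₁ᵀ - L*‖∞ ≥ ε γ`.
(Here the `Matrix` norm is the entrywise maximum norm.) -/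
theorem eigenvalue_perturbation
    (J K : ℕ) (Lstar : Matrix (Fin J) (Fin J) ℝ)
    (U1star : Matrix (Fin J) (Fin K) ℝ) (d : Fin K → ℝ)
    (hU : U1starᵀ * U1star = 1)
    (hdpos : ∀ i, 0 < d i)
    (hdistinct : Function.Injective d)
    (hdecomp : Lstar = U1star * Matrix.diagonal d * U1starᵀ)
    (hpsd : Lstar.PosSemidef) (hrank : Lstar.rank = K) :
    ∀ κ > (0 : ℝ), ∃ ε > (0 : ℝ), ∃ γ₀ > (0 : ℝ), ∀ γ : ℝ, 0 < γ → γ ≤ γ₀ →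
      ∀ U1 : Matrix (Fin J) (Fin K) ℝ, U1ᵀ * U1 = 1 → ‖U1 - U1star‖ = γ →
      ∀ e : Fin K → ℝ, ‖Matrix.diagonal e - Matrix.diagonal d‖ ≤ κ * γ →
      ε * γ ≤ ‖U1 * Matrix.diagonal e * U1ᵀ - Lstar‖ :=
  eigenvalue_perturbation_general J K Lstar U1star d hU hdpos hdistinct hdecomp
end

section
/- Let U = [U₁, U₂] be a J×J real orthogonal matrix, where U₁ consists of its first K columns and U₂ of its last J−K columns. Let T = {U₁ Y + Yᵀ U₁ᵀ : Y ∈ ℝ^{K×J}}, a linear subspace of the space of J×J real symmetric matrices. Then for every J×J real symmetric matrix M, the orthogonal projection of M onto T with respect to the trace inner product equals M − U₂U₂ᵀ M U₂U₂ᵀ, and the orthogonal projection of M onto the orthogonal complement of T within the symmetric matrices equals U₂U₂ᵀ M U₂U₂ᵀ. -/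
open Matrix

/-!
Write `Q = U₁U₁ᵀ` and `P = U₂U₂ᵀ`. Since `U` is square, orthonormality of its columns gives
`Q + P = 1`, so `M - PMP = QM + MQ - QMQ`, which is `U₁Y + (U₁Y)ᵀ` for `Y = U₁ᵀM(1 - Q/2)`.
Orthogonality of the two column blocks gives `PU₁ = 0`, and by cyclicity of the trace this kills
the inner product of `PMP` with both `U₁Y` and `YᵀU₁ᵀ`.
-/

namespace Matrix

variable {m n n₁ n₂ R : Type*} [Fintype m]

theorem card_le_card_of_mul_eq_one [Fintype n] [CommRing R] [StrongRankCondition R] [DecidableEq m]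
    {A : Matrix m n R} {B : Matrix n m R} (h : A * B = 1) :
    Fintype.card m ≤ Fintype.card n := by
  calc Fintype.card m = (A * B).rank := by rw [h, rank_one]
    _ ≤ A.rank := rank_mul_le_left A B
    _ ≤ Fintype.card n := rank_le_card_width A

theorem transpose_fromCols_mul_fromCols_eq_one_iff [Semiring R] [DecidableEq n₁] [DecidableEq n₂]
    {A : Matrix m n₁ R} {B : Matrix m n₂ R} :
    (fromCols A B)ᵀ * fromCols A B = 1 ↔
      Aᵀ * A = 1 ∧ Aᵀ * B = 0 ∧ Bᵀ * A = 0 ∧ Bᵀ * B = 1 := by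
  rw [transpose_fromCols, fromRows_mul_fromCols, ← fromBlocks_one, fromBlocks_inj]

theorem mul_transpose_add_mul_transpose_eq_one [Fintype n₁] [Fintype n₂] [CommRing R]
    [DecidableEq m] [DecidableEq n₁] [DecidableEq n₂] {A : Matrix m n₁ R} {B : Matrix m n₂ R}
    (hcard : Fintype.card m = Fintype.card n₁ + Fintype.card n₂)
    (h : (fromCols A B)ᵀ * fromCols A B = 1) :
    A * Aᵀ + B * Bᵀ = 1 := by
  rw [← fromCols_mul_fromRows, ← transpose_fromCols]
  exact (mul_eq_one_comm_of_card_eq m (n₁ ⊕ n₂) R (by rw [hcard, Fintype.card_sum])).mpr h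

theorem IsSymm.sub_mul_mul_eq_mul_add_transpose [Fintype n] [Field R] [CharZero R] [DecidableEq m]
    {M P : Matrix m m R} {U : Matrix m n R} (hM : M.IsSymm) (hP : P = 1 - U * Uᵀ) :
    M - P * M * P = U * (Uᵀ * M - (1 / 2 : R) • (Uᵀ * M * (U * Uᵀ))) +
      (Uᵀ * M - (1 / 2 : R) • (Uᵀ * M * (U * Uᵀ)))ᵀ * Uᵀ := by
  subst hP
  simp only [transpose_sub, transpose_smul, transpose_mul, transpose_transpose, hM.eq,
    Matrix.mul_sub, Matrix.sub_mul, Matrix.mul_one, Matrix.one_mul, Matrix.smul_mul,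
    Matrix.mul_smul, Matrix.mul_assoc]
  module

theorem trace_mul_mul_mul_transpose_eq_zero [Fintype n₁] [Fintype n₂] [CommRing R]
    {U : Matrix m n₁ R} {V : Matrix m n₂ R}
    (h : Vᵀ * U = 0) (N : Matrix m m R) (Y : Matrix n₁ m R) :
    trace (V * Vᵀ * N * (V * Vᵀ) * (U * Y + Yᵀ * Uᵀ)ᵀ) = 0 := by
  have h' : Uᵀ * V = 0 := by simpa using congrArg transpose h
  rw [transpose_add, transpose_mul, transpose_mul, transpose_transpose, transpose_transpose,
    Matrix.mul_add, trace_add, trace_mul_comm _ (Yᵀ * Uᵀ)]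
  simp only [Matrix.mul_assoc, ← Matrix.mul_assoc Uᵀ V, ← Matrix.mul_assoc Vᵀ U, h, h',
    Matrix.zero_mul, Matrix.mul_zero, trace_zero, add_zero]

end Matrix

/-- Projection formula from the proof of Lemma 8: if `U = [U₁, U₂]` is orthogonal and
`T = {U₁ Y + Yᵀ U₁ᵀ}` is the tangent space, then for symmetric `M` the orthogonal projection
(trace inner product) of `M` onto `T` is `M − U₂U₂ᵀ M U₂U₂ᵀ`, and the projection onto the
orthogonal complement of `T` within the symmetric matrices is `U₂U₂ᵀ M U₂U₂ᵀ`.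
This is expressed by: `M − U₂U₂ᵀMU₂U₂ᵀ ∈ T`, the remainder `U₂U₂ᵀMU₂U₂ᵀ` is symmetric, and
it is trace-orthogonal to every element of `T`. -/
theorem tangent_space_projection_formula
    (J K : ℕ) (U1 : Matrix (Fin J) (Fin K) ℝ) (U2 : Matrix (Fin J) (Fin (J - K)) ℝ)
    (horth : (Matrix.fromCols U1 U2)ᵀ * Matrix.fromCols U1 U2 = 1)
    (M : Matrix (Fin J) (Fin J) ℝ) (hM : M.IsSymm) :
    (∃ Y : Matrix (Fin K) (Fin J) ℝ,
        M - U2 * U2ᵀ * M * (U2 * U2ᵀ) = U1 * Y + Yᵀ * U1ᵀ) ∧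
    (U2 * U2ᵀ * M * (U2 * U2ᵀ)).IsSymm ∧
    (∀ Y : Matrix (Fin K) (Fin J) ℝ,
        Matrix.trace ((U2 * U2ᵀ * M * (U2 * U2ᵀ)) * (U1 * Y + Yᵀ * U1ᵀ)ᵀ) = 0) := by
  obtain ⟨h11, -, h21, -⟩ := transpose_fromCols_mul_fromCols_eq_one_iff.mp horth
  -- `J - K` truncates, so `U` is square only because `U₁ᵀU₁ = 1` forces `K ≤ J`.
  have hKJ : K ≤ J := by simpa using card_le_card_of_mul_eq_one h11
  have hsum : U1 * U1ᵀ + U2 * U2ᵀ = 1 :=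
    mul_transpose_add_mul_transpose_eq_one (by simp only [Fintype.card_fin]; omega) horth
  refine ⟨⟨_, hM.sub_mul_mul_eq_mul_add_transpose (eq_sub_of_add_eq' hsum)⟩, ?_,
    trace_mul_mul_mul_transpose_eq_zero h21 M⟩
  show _ = _
  simp only [transpose_mul, transpose_transpose, hM.eq, Matrix.mul_assoc]
end

section
/- Let U₁ be a J×K real matrix with orthonormal columns (U₁ᵀU₁ = I_K), and let 𝒟 = {U₁ D' U₁ᵀ : D' a K×K diagonal matrix}, a linear subspace of the J×J real symmetric matrices. Then for every J×J real symmetric matrix M, the orthogonal projection of M onto 𝒟 with respect to the trace inner product equals U₁ diag(U₁ᵀ M U₁) U₁ᵀ, where diag(N) denotes the diagonal matrix with the same diagonal entries as N. -/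
/-! By cyclicity of the trace, `trace (A * (U D Uᵀ)) = ∑ i, (Uᵀ A U)ᵢᵢ dᵢ` for any `A`. Since
`U₁ᵀ U₁ = 1` gives `U₁ᵀ (U₁ diag(c) U₁ᵀ) U₁ = diag(c)`, the matrices `M` and
`U₁ diag(U₁ᵀ M U₁) U₁ᵀ` pair identically with every element of `𝒟`. -/

open Matrix

namespace Matrix

variable {m n R : Type*} [Fintype n] [DecidableEq n] [CommRing R]

theorem transpose_mul_diagonal_mul_transpose (U : Matrix m n R) (d : n → R) :
    (U * diagonal d * Uᵀ)ᵀ = U * diagonal d * Uᵀ := by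
  simp only [transpose_mul, diagonal_transpose, transpose_transpose, Matrix.mul_assoc]

variable [Fintype m]

theorem trace_mul_mul_diagonal_mul_transpose (A : Matrix m m R) (U : Matrix m n R)
    (d : n → R) : trace (A * (U * diagonal d * Uᵀ)) = ∑ i, (Uᵀ * A * U) i i * d i := by
  calc trace (A * (U * diagonal d * Uᵀ)) = trace (Uᵀ * A * U * diagonal d) := by
        rw [← Matrix.mul_assoc, ← Matrix.mul_assoc, trace_mul_comm]
        simp only [Matrix.mul_assoc]
    _ = ∑ i, (Uᵀ * A * U) i i * d i := by simp [trace, mul_diagonal]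

theorem transpose_mul_mul_diagonal_mul_transpose_mul {U : Matrix m n R} (hU : Uᵀ * U = 1)
    (d : n → R) : Uᵀ * (U * diagonal d * Uᵀ) * U = diagonal d := by
  simp only [← Matrix.mul_assoc, hU, Matrix.one_mul]
  rw [Matrix.mul_assoc, hU, Matrix.mul_one]

end Matrix

theorem diag_projection_formula_general
    (J K : ℕ) (U1 : Matrix (Fin J) (Fin K) ℝ) (hU : U1ᵀ * U1 = 1)
    (M : Matrix (Fin J) (Fin J) ℝ) :
    (∃ D' : Fin K → ℝ,
        U1 * Matrix.diagonal (fun i => (U1ᵀ * M * U1) i i) * U1ᵀ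
          = U1 * Matrix.diagonal D' * U1ᵀ) ∧
    (∀ D' : Fin K → ℝ,
        Matrix.trace ((M - U1 * Matrix.diagonal (fun i => (U1ᵀ * M * U1) i i) * U1ᵀ)
          * (U1 * Matrix.diagonal D' * U1ᵀ)ᵀ) = 0) := by
  refine ⟨⟨_, rfl⟩, fun D' => ?_⟩
  rw [transpose_mul_diagonal_mul_transpose, Matrix.sub_mul, trace_sub,
    trace_mul_mul_diagonal_mul_transpose, trace_mul_mul_diagonal_mul_transpose,
    transpose_mul_mul_diagonal_mul_transpose_mul hU]
  simp only [diagonal_apply_eq, sub_self]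

/-- Projection formula from the proof of Lemma 8: for `U₁` with orthonormal columns and
`𝒟 = {U₁ D' U₁ᵀ : D' diagonal}`, the orthogonal projection (trace inner product) of a
symmetric `M` onto `𝒟` equals `U₁ diag(U₁ᵀ M U₁) U₁ᵀ`: this matrix lies in `𝒟` and the
residual is trace-orthogonal to every element of `𝒟`. -/
theorem diag_projection_formula
    (J K : ℕ) (U1 : Matrix (Fin J) (Fin K) ℝ) (hU : U1ᵀ * U1 = 1)
    (M : Matrix (Fin J) (Fin J) ℝ) (hM : M.IsSymm) :
    (∃ D' : Fin K → ℝ,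
        U1 * Matrix.diagonal (fun i => (U1ᵀ * M * U1) i i) * U1ᵀ
          = U1 * Matrix.diagonal D' * U1ᵀ) ∧
    (∀ D' : Fin K → ℝ,
        Matrix.trace ((M - U1 * Matrix.diagonal (fun i => (U1ᵀ * M * U1) i i) * U1ᵀ)
          * (U1 * Matrix.diagonal D' * U1ᵀ)ᵀ) = 0) :=
  diag_projection_formula_general J K U1 hU M
end

section
/- Let M̄ be any J×J real matrix and let L̄ and S̄ be J×J real symmetric matrices. Then the unique minimizer of the function (M, L, S) ↦ ½‖M − M̄‖_F² + ½‖L − L̄‖_F² + ½‖S − S̄‖_F², over triples of J×J real matrices subject to the constraints that M is symmetric and M = L + S, is given by M̃ = (1/3)M̄ + (1/3)M̄ᵀ + (1/3)L̄ + (1/3)S̄, L̃ = (2/3)L̄ + (1/6)M̄ + (1/6)M̄ᵀ − (1/3)S̄, and S̃ = (2/3)S̄ + (1/6)M̄ + (1/6)M̄ᵀ − (1/3)L̄. -/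
/-!
The feasible set `{(M, L, S) | M symmetric, M = L + S}` is a linear subspace, and the residual
`(M̃ - M̄, L̃ - L̄, S̃ - S̄)` of the candidate is orthogonal to it for the trace inner product
`⟪A, B⟫ = tr (Aᵀ B)`: its `L`- and `S`-components agree, and its `M`- plus `L`-component is the
skew-symmetric matrix `(M̄ᵀ - M̄) / 2`, which is orthogonal to every symmetric matrix. By
Pythagoras the objective at a feasible point is its value at the candidate plus half the squared
distance to the candidate.
-/

open Matrix

/-- Squared Frobenius norm `‖A‖_F² = Σ_{i,j} A_ij²`. -/
noncomputable def frobSq16 {J : ℕ} (A : Matrix (Fin J) (Fin J) ℝ) : ℝ := ∑ i, ∑ j, (A i j) ^ 2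

section

variable {m n R : Type*} [Fintype m] [Fintype n] [CommRing R]

theorem vec_add_dotProduct_vec_add (A B : Matrix m n R) :
    vec (A + B) ⬝ᵥ vec (A + B) = vec A ⬝ᵥ vec A + 2 * (vec A ⬝ᵥ vec B) + vec B ⬝ᵥ vec B := by
  simp only [vec_add, add_dotProduct, dotProduct_add, dotProduct_comm (vec B) (vec A)]
  ring

theorem vec_dotProduct_vec_eq_zero_of_skew_of_isSymm [IsAddTorsionFree R] {A S : Matrix n n R}
    (hA : Aᵀ = -A) (hS : S.IsSymm) : vec A ⬝ᵥ vec S = 0 := by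
  rw [vec_dotProduct_vec, ← self_eq_neg]
  calc (Aᵀ * S).trace = (Sᵀ * A).trace := by
        rw [← trace_transpose, transpose_mul, transpose_transpose]
    _ = (A * S).trace := by rw [hS.eq, trace_mul_comm]
    _ = -(Aᵀ * S).trace := by rw [hA, Matrix.neg_mul, trace_neg, neg_neg]

theorem consensus_objective_eq_add [IsAddTorsionFree R] {Mb Lb Sb Mt Lt St M L S : Matrix n n R}
    (hres : Lt - Lb = St - Sb) (hskew : (Mt - Mb + (Lt - Lb))ᵀ = -(Mt - Mb + (Lt - Lb)))
    (hMt : Mt.IsSymm) (hMtLS : Mt = Lt + St) (hM : M.IsSymm) (hMLS : M = L + S) :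
    vec (M - Mb) ⬝ᵥ vec (M - Mb) + vec (L - Lb) ⬝ᵥ vec (L - Lb) + vec (S - Sb) ⬝ᵥ vec (S - Sb) =
      vec (Mt - Mb) ⬝ᵥ vec (Mt - Mb) + vec (Lt - Lb) ⬝ᵥ vec (Lt - Lb)
        + vec (St - Sb) ⬝ᵥ vec (St - Sb)
        + (vec (M - Mt) ⬝ᵥ vec (M - Mt) + vec (L - Lt) ⬝ᵥ vec (L - Lt)
          + vec (S - St) ⬝ᵥ vec (S - St)) := by
  have hdiff : M - Mt = (L - Lt) + (S - St) := by rw [hMLS, hMtLS]; abel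
  have hcross : vec (Mt - Mb) ⬝ᵥ vec (M - Mt) + vec (Lt - Lb) ⬝ᵥ vec (L - Lt)
      + vec (St - Sb) ⬝ᵥ vec (S - St) = 0 := by
    rw [← hres, add_assoc, ← dotProduct_add, ← vec_add, ← hdiff, ← add_dotProduct, ← vec_add]
    exact vec_dotProduct_vec_eq_zero_of_skew_of_isSymm hskew (hM.sub hMt)
  rw [show M - Mb = (Mt - Mb) + (M - Mt) by abel, show L - Lb = (Lt - Lb) + (L - Lt) by abel,
    show S - Sb = (St - Sb) + (S - St) by abel, vec_add_dotProduct_vec_add,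
    vec_add_dotProduct_vec_add, vec_add_dotProduct_vec_add]
  linear_combination 2 * hcross

end

theorem frobSq16_eq_vec_dotProduct {J : ℕ} (A : Matrix (Fin J) (Fin J) ℝ) :
    frobSq16 A = vec A ⬝ᵥ vec A := by
  rw [frobSq16, dotProduct, Fintype.sum_prod_type, Finset.sum_comm]
  simp only [vec, sq]

theorem frobSq16_nonneg {J : ℕ} (A : Matrix (Fin J) (Fin J) ℝ) : 0 ≤ frobSq16 A := by
  rw [frobSq16_eq_vec_dotProduct]; exact dotProduct_self_star_nonneg _

theorem frobSq16_eq_zero_iff {J : ℕ} {A : Matrix (Fin J) (Fin J) ℝ} : frobSq16 A = 0 ↔ A = 0 := by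
  rw [frobSq16_eq_vec_dotProduct, dotProduct_self_eq_zero, vec_eq_zero_iff]

/-- Closed-form solution of the consensus projection (Step 2 of the ADMM algorithm): for any
`M̄` and symmetric `L̄`, `S̄`, the unique minimizer of
`½‖M − M̄‖_F² + ½‖L − L̄‖_F² + ½‖S − S̄‖_F²` subject to `M` symmetric and `M = L + S` is
`M̃ = ⅓M̄ + ⅓M̄ᵀ + ⅓L̄ + ⅓S̄`, `L̃ = ⅔L̄ + ⅙M̄ + ⅙M̄ᵀ − ⅓S̄`, `S̃ = ⅔S̄ + ⅙M̄ + ⅙M̄ᵀ − ⅓L̄`. -/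
theorem admm_consensus_projection
    (J : ℕ) (Mb Lb Sb : Matrix (Fin J) (Fin J) ℝ) (hLb : Lb.IsSymm) (hSb : Sb.IsSymm) :
    let Mt := (1/3 : ℝ) • Mb + (1/3 : ℝ) • Mbᵀ + (1/3 : ℝ) • Lb + (1/3 : ℝ) • Sb
    let Lt := (2/3 : ℝ) • Lb + (1/6 : ℝ) • Mb + (1/6 : ℝ) • Mbᵀ - (1/3 : ℝ) • Sb
    let St := (2/3 : ℝ) • Sb + (1/6 : ℝ) • Mb + (1/6 : ℝ) • Mbᵀ - (1/3 : ℝ) • Lb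
    (Mt.IsSymm ∧ Mt = Lt + St) ∧
    (∀ M L S : Matrix (Fin J) (Fin J) ℝ, M.IsSymm → M = L + S →
      frobSq16 (Mt - Mb) / 2 + frobSq16 (Lt - Lb) / 2 + frobSq16 (St - Sb) / 2
        ≤ frobSq16 (M - Mb) / 2 + frobSq16 (L - Lb) / 2 + frobSq16 (S - Sb) / 2) ∧
    (∀ M L S : Matrix (Fin J) (Fin J) ℝ, M.IsSymm → M = L + S →
      frobSq16 (M - Mb) / 2 + frobSq16 (L - Lb) / 2 + frobSq16 (S - Sb) / 2
          = frobSq16 (Mt - Mb) / 2 + frobSq16 (Lt - Lb) / 2 + frobSq16 (St - Sb) / 2 →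
      M = Mt ∧ L = Lt ∧ S = St) := by
  intro Mt Lt St
  have hMt : Mt.IsSymm := by
    simp only [Mt, IsSymm, transpose_add, transpose_smul, transpose_transpose, hLb.eq, hSb.eq]
    abel
  have hMtLS : Mt = Lt + St := by simp only [Mt, Lt, St]; module
  have hres : Lt - Lb = St - Sb := by simp only [Lt, St]; module
  have hskew : (Mt - Mb + (Lt - Lb))ᵀ = -(Mt - Mb + (Lt - Lb)) := by
    rw [show Mt - Mb + (Lt - Lb) = (1/2 : ℝ) • (Mbᵀ - Mb) by simp only [Mt, Lt]; module,
      transpose_smul, transpose_sub, transpose_transpose, ← smul_neg, neg_sub]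
  have hsplit : ∀ M L S : Matrix (Fin J) (Fin J) ℝ, M.IsSymm → M = L + S →
      frobSq16 (M - Mb) / 2 + frobSq16 (L - Lb) / 2 + frobSq16 (S - Sb) / 2
        = frobSq16 (Mt - Mb) / 2 + frobSq16 (Lt - Lb) / 2 + frobSq16 (St - Sb) / 2
          + (frobSq16 (M - Mt) + frobSq16 (L - Lt) + frobSq16 (S - St)) / 2 := by
    intro M L S hM hMLS
    simp only [frobSq16_eq_vec_dotProduct]
    linear_combination consensus_objective_eq_add hres hskew hMt hMtLS hM hMLS / 2
  refine ⟨⟨hMt, hMtLS⟩, fun M L S hM hMLS => ?_, fun M L S hM hMLS hmin => ?_⟩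
  · rw [hsplit M L S hM hMLS]
    linarith [frobSq16_nonneg (M - Mt), frobSq16_nonneg (L - Lt), frobSq16_nonneg (S - St)]
  · rw [hsplit M L S hM hMLS] at hmin
    rw [← sub_eq_zero, ← frobSq16_eq_zero_iff, ← sub_eq_zero (a := L), ← frobSq16_eq_zero_iff,
      ← sub_eq_zero (a := S), ← frobSq16_eq_zero_iff]
    refine ⟨?_, ?_, ?_⟩ <;>
      linarith [frobSq16_nonneg (M - Mt), frobSq16_nonneg (L - Lt), frobSq16_nonneg (S - St)]
end
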